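/- Let G be a graph, F a subgraph of G, and c an edge colouring of G such that every component of F is fixed pointwise by every colour-preserving automorphism of G, and every component B of G − V(F) is fixed setwise with the restriction of c to B being a distinguishing colouring of the rooted graph (B, w_B) for a vertex w_B fixed by all colour-preserving automorphisms. Then c is a distinguishing colouring of G. -/
import Mathlib


open SimpleGraph

/-- The vertex set (inside `V`) of a connected component of `G − V(F)`. -/
def compSupp {V : Type*} (G : SimpleGraph V) (F : G.Subgraph)
    (C : (G.induce (F.vertsᶜ)).ConnectedComponent) : Set V :=
  Subtype.val '' {w : ↥(F.vertsᶜ) | (G.induce (F.vertsᶜ)).connectedComponentMk w = C}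

/-- Suppose `c` is an edge colouring of `G` and `F` a subgraph of `G` such that:
every colour-preserving automorphism of `G` fixes `F` pointwise; every component `B` of
`G − V(F)` is stabilized setwise by colour-preserving automorphisms; and each such `B`
has a vertex `w_B`, fixed by all colour-preserving automorphisms, such that the
restriction of `c` to `B` is a distinguishing colouring of the rooted graph `(B, w_B)`.
Then `c` is a distinguishing colouring of `G`. -/
theorem stmt17 {V α : Type*} (G : SimpleGraph V) (F : G.Subgraph) (c : G.edgeSet → α)
    (hpoint : ∀ φ : G ≃g G, (∀ e : G.edgeSet, c (φ.mapEdgeSet e) = c e) →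
      ∀ v ∈ F.verts, φ v = v)
    (hcomp : ∀ C : (G.induce (F.vertsᶜ)).ConnectedComponent,
      (∀ φ : G ≃g G, (∀ e : G.edgeSet, c (φ.mapEdgeSet e) = c e) →
          ⇑φ '' compSupp G F C = compSupp G F C) ∧
      ∃ w : ↥(compSupp G F C),
        (∀ φ : G ≃g G, (∀ e : G.edgeSet, c (φ.mapEdgeSet e) = c e) → φ ↑w = ↑w) ∧
        ∀ ψ : G.induce (compSupp G F C) ≃g G.induce (compSupp G F C),
          ψ w = w →
          (∀ (x y : ↥(compSupp G F C)) (h : (G.induce (compSupp G F C)).Adj x y),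
            c ⟨s(↑x, ↑y), h⟩ = c ⟨s(↑(ψ x), ↑(ψ y)), ψ.map_adj_iff.mpr h⟩) →
          ∀ x, ψ x = x) :
    ∀ φ : G ≃g G, (∀ e : G.edgeSet, c (φ.mapEdgeSet e) = c e) → ∀ v, φ v = v := by
  intro φ hφ v
  by_cases hv : v ∈ F.verts
  · exact hpoint φ hφ v hv
  · have hv' : v ∈ F.vertsᶜ := hv
    set C := (G.induce (F.vertsᶜ)).connectedComponentMk ⟨v, hv'⟩ with hC
    obtain ⟨hstab, w, hw, hdist⟩ := hcomp C
    have hstab' := hstab φ hφ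
    have hmem : ∀ x : V, x ∈ compSupp G F C ↔ φ x ∈ compSupp G F C := by
      intro x
      constructor
      · intro hx; rw [← hstab']; exact ⟨x, hx, rfl⟩
      · intro hx
        rw [← hstab'] at hx
        obtain ⟨y, hy, hyx⟩ := hx
        rwa [← φ.toEquiv.injective hyx]
    have hvS : v ∈ compSupp G F C := ⟨⟨v, hv'⟩, rfl, rfl⟩
    let e : ↥(compSupp G F C) ≃ ↥(compSupp G F C) := φ.toEquiv.subtypeEquiv hmem
    let ψ : G.induce (compSupp G F C) ≃g G.induce (compSupp G F C) :=
      { toEquiv := e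
        map_rel_iff' := by
          intro a b
          simp only [e, Equiv.subtypeEquiv_apply, comap_adj, Function.Embedding.coe_subtype]
          exact φ.map_adj_iff }
    have hψw : ψ w = w := Subtype.ext (hw φ hφ)
    have hψc : ∀ (x y : ↥(compSupp G F C)) (h : (G.induce (compSupp G F C)).Adj x y),
        c ⟨s(↑x, ↑y), h⟩ = c ⟨s(↑(ψ x), ↑(ψ y)), ψ.map_adj_iff.mpr h⟩ := by
      intro x y h
      have h1 : φ.mapEdgeSet ⟨s(↑x, ↑y), h⟩ = ⟨s(↑(ψ x), ↑(ψ y)), ψ.map_adj_iff.mpr h⟩ := by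
        apply Subtype.ext
        simp [Iso.mapEdgeSet, ψ, e]
      rw [← hφ ⟨s(↑x, ↑y), h⟩, h1]
    have := hdist ψ hψw hψc ⟨v, hvS⟩
    exact Subtype.ext_iff.mp this
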